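/- Connectivity for lattices built from 4-loops: Let Λ be a lattice constructed by gluing 4-cycles along shared edges as in the paper (Λ_1 = C_1 a 4-cycle; Λ_l obtained from Λ_{l−1} by attaching a new 4-cycle C_l sharing at least one edge with Λ_{l−1} and at most one edge with each previous C_{l'}), with |Λ| ≥ n + 2 sites. Then the SU(n) one-hole model on Λ satisfies the connectivity condition: any two basis indices (x, α) and (x', α') with the same flavor multiplicities are connected by a sequence of elementary hole moves. -/

import Mathlib

open Finset

/-- A flavor configuration with a hole at `x`. -/
abbrev HoleConf (V : Type*) (n : ℕ) (x : V) := {z : V // z ≠ x} → Fin n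

/-- Moving the hole from `x` to `y`: the flavor at `y` is transferred to `x`. -/
def moveConf {V : Type*} [DecidableEq V] {n : ℕ} (x y : V) (hxy : x ≠ y)
    (α : HoleConf V n x) : HoleConf V n y :=
  fun z => if h : (z : V) = x then α ⟨y, Ne.symm hxy⟩ else α ⟨z, h⟩

/-- The index set of the one-hole basis `Ψ_{(x,α)}`. -/
abbrev HoleIndex (V : Type*) (n : ℕ) := Σ x : V, HoleConf V n x

/-- The numbers of fermions of each flavor in the configuration `a`. -/
def flavorCount {V : Type*} [Fintype V] [DecidableEq V] {n : ℕ}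
    (a : HoleIndex V n) : Fin n → ℕ :=
  fun β => (univ.filter (fun z : {z : V // z ≠ a.1} => a.2 z = β)).card

/-- The edges of the 4-loop with (cyclically ordered) vertices `c 0, …, c 3`. -/
def cycEdges {V : Type*} (c : Fin 4 → V) : Set (Sym2 V) :=
  {e | ∃ i : Fin 4, e = s(c i, c (i + 1))}

/-!
Extend a configuration to a coloring of all sites by a dummy color at the hole. A hole walk then
acts on colorings by permutations, and the closed walks at a site `x` act through a subgroup of
permutations. Running the hole once around a 4-loop from one corner realizes the 3-cycle of the
other three corners. If, on a region, every 3-cycle of the other sites is realizable from every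
hole position, then after gluing a new 4-loop along an edge the one new 3-cycle (which meets the
old region) generates all 3-cycles of the enlarged region; moving the hole along an edge conjugates
them by a transposition. Hence with the hole at `x` every even permutation of the other sites is
realizable. Since some flavor occurs twice, parity is no obstruction, so two configurations with
the same multiplicities are connected once the hole has been walked to its final position.
-/

lemma Set.exists_mem_ne_of_three_lt_encard {α : Type*} {S : Set α} (h : 3 < S.encard)
    (a b c : α) : ∃ w ∈ S, w ≠ a ∧ w ≠ b ∧ w ≠ c := by
  by_contra! hS
  have hsub : S ⊆ {a, b, c} := fun w hw => by
    by_cases hwa : w = a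
    · exact Or.inl hwa
    by_cases hwb : w = b
    · exact Or.inr (Or.inl hwb)
    · exact Or.inr (Or.inr (hS w hw hwa hwb))
  have h3 : ({a, b, c} : Set α).encard ≤ 3 :=
    (encard_insert_le _ _).trans (by
      grw [encard_insert_le, encard_singleton]; norm_num)
  exact absurd ((encard_le_encard hsub).trans h3) (not_le.mpr h)

lemma Fin.iUnion_val_le_zero {α : Type*} {L : ℕ} (s : Fin L → Set α) (hL : 0 < L) :
    ⋃ (l : Fin L) (_ : (l : ℕ) ≤ 0), s l = s ⟨0, hL⟩ := by
  ext z
  simp only [Set.mem_iUnion, exists_prop, Nat.le_zero]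
  exact ⟨fun ⟨l, hl, hz⟩ => (Fin.ext hl : l = ⟨0, hL⟩) ▸ hz,
    fun hz => ⟨_, rfl, hz⟩⟩

lemma Fin.iUnion_val_le_succ {α : Type*} {L : ℕ} (s : Fin L → Set α) {m : ℕ}
    (hm : m + 1 < L) :
    ⋃ (l : Fin L) (_ : (l : ℕ) ≤ m + 1), s l
      = (⋃ (l : Fin L) (_ : (l : ℕ) ≤ m), s l) ∪ s ⟨m + 1, hm⟩ := by
  ext z
  simp only [Set.mem_union, Set.mem_iUnion, exists_prop, Nat.le_succ_iff]
  constructor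
  · rintro ⟨l, hl | hl, hz⟩
    exacts [Or.inl ⟨l, hl, hz⟩, Or.inr ((Fin.ext hl : l = ⟨m + 1, hm⟩) ▸ hz)]
  · rintro (⟨l, hl, hz⟩ | hz)
    exacts [⟨l, Or.inl hl, hz⟩, ⟨_, Or.inr rfl, hz⟩]

lemma exists_perm_comp_eq_of_card_fiber_eq {α β : Type*} [Fintype α] [DecidableEq β]
    {f g : α → β} (h : ∀ c, Fintype.card {a // f a = c} = Fintype.card {a // g a = c}) :
    ∃ σ : Equiv.Perm α, g = f ∘ σ :=
  ⟨Equiv.ofFiberEquiv fun c => Fintype.equivOfCardEq (h c).symm,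
    funext fun a => (Equiv.ofFiberEquiv_map _ a).symm⟩

namespace Equiv.Perm

variable {α : Type*} [DecidableEq α]

def threeCycle (a b c : α) : Perm α := swap a b * swap b c

variable {a b c : α}

lemma threeCycle_apply_left (hab : a ≠ b) (hac : a ≠ c) : threeCycle a b c a = b := by
  simp [threeCycle, swap_apply_of_ne_of_ne hab hac]

lemma threeCycle_apply_mid (hac : a ≠ c) (hbc : b ≠ c) : threeCycle a b c b = c := by
  simp [threeCycle, swap_apply_of_ne_of_ne hac.symm hbc.symm]

lemma threeCycle_apply_right : threeCycle a b c c = a := by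
  simp [threeCycle]

lemma threeCycle_apply_of_ne {z : α} (hza : z ≠ a) (hzb : z ≠ b) (hzc : z ≠ c) :
    threeCycle a b c z = z := by
  simp [threeCycle, swap_apply_of_ne_of_ne hzb hzc, swap_apply_of_ne_of_ne hza hzb]

lemma threeCycle_rotate (hab : a ≠ b) (hac : a ≠ c) (hbc : b ≠ c) :
    threeCycle a b c = threeCycle b c a := by
  ext z
  simp only [threeCycle, coe_mul, Function.comp_apply]
  grind

lemma threeCycle_inv (hab : a ≠ b) (hac : a ≠ c) (hbc : b ≠ c) :
    (threeCycle a b c)⁻¹ = threeCycle b a c := by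
  rw [inv_eq_iff_mul_eq_one]
  ext z
  simp only [threeCycle, coe_mul, Function.comp_apply, one_apply]
  grind

lemma conj_threeCycle (π : Perm α) :
    π * threeCycle a b c * π⁻¹ = threeCycle (π a) (π b) (π c) := by
  rw [threeCycle, threeCycle, swap_apply_apply, swap_apply_apply]
  group

lemma swap_mul_swap_mul_swap_mul_swap {a b c d : α} (hab : a ≠ b) (hac : a ≠ c) (had : a ≠ d)
    (hbc : b ≠ c) (hbd : b ≠ d) (hcd : c ≠ d) :
    swap a b * swap b c * swap c d * swap d a = threeCycle b c d := by
  ext z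
  simp only [threeCycle, coe_mul, Function.comp_apply]
  grind

def ThreeCyclesOn (H : Subgroup (Perm α)) (S : Set α) : Prop :=
  ∀ a ∈ S, ∀ b ∈ S, ∀ c ∈ S, a ≠ b → a ≠ c → b ≠ c → threeCycle a b c ∈ H

namespace ThreeCyclesOn

variable {H K : Subgroup (Perm α)} {S T : Set α}

lemma mono (h : ThreeCyclesOn H T) (hST : S ⊆ T) : ThreeCyclesOn H S :=
  fun a ha b hb c hc => h a (hST ha) b (hST hb) c (hST hc)

lemma of_conj (h : ThreeCyclesOn H S) (σ : Perm α) (hσ : ∀ π ∈ H, σ * π * σ⁻¹ ∈ K)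
    (hT : ∀ z ∈ T, σ⁻¹ z ∈ S) : ThreeCyclesOn K T := by
  intro a ha b hb c hc hab hac hbc
  have h' := hσ _ (h _ (hT a ha) _ (hT b hb) _ (hT c hc) (by simpa) (by simpa) (by simpa))
  simpa [conj_threeCycle] using h'

lemma insert (h : ThreeCyclesOn H S) {a b q : α} (ha : a ∈ S) (hb : b ∈ S) (hab : a ≠ b)
    (hq : threeCycle a b q ∈ H) : ThreeCyclesOn H (Insert.insert q S) := by
  by_cases hqS : q ∈ S
  · rwa [Set.insert_eq_of_mem hqS]
  have hne : ∀ {z}, z ∈ S → z ≠ q := fun hz => ne_of_mem_of_not_mem hz hqS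
  -- Conjugating by `(x y z)`, or inverting when `z = x`, turns `(x y q)` into `(y z q)`.
  have step : ∀ x ∈ S, ∀ y ∈ S, ∀ z ∈ S, x ≠ y → z ≠ y →
      threeCycle x y q ∈ H → threeCycle y z q ∈ H := by
    intro x hx y hy z hz hxy hzy hxyq
    rcases eq_or_ne z x with rfl | hzx
    · rw [← threeCycle_inv hxy (hne hx) (hne hy)]
      exact H.inv_mem hxyq
    · have := H.mul_mem (H.mul_mem (h x hx y hy z hz hxy hzx.symm hzy.symm) hxyq)
        (H.inv_mem (h x hx y hy z hz hxy hzx.symm hzy.symm))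
      rwa [conj_threeCycle, threeCycle_apply_left hxy hzx.symm,
        threeCycle_apply_mid hzx.symm hzy.symm,
        threeCycle_apply_of_ne (hne hx).symm (hne hy).symm (hne hz).symm] at this
  have hcyc : ∀ x ∈ S, ∀ y ∈ S, x ≠ y → threeCycle x y q ∈ H := by
    intro x hx y hy hxy
    rcases eq_or_ne x b with rfl | hxb
    · exact step a ha x hx y hy hab hxy.symm hq
    · exact step b hb x hx y hy hxb.symm hxy.symm (step a ha b hb x hx hab hxb hq)
  intro x hx y hy z hz hxy hxz hyz
  rcases hx with rfl | hx
  · rw [threeCycle_rotate hxy hxz hyz]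
    exact hcyc y (hy.resolve_left hxy.symm) z (hz.resolve_left hxz.symm) hyz
  rcases hy with rfl | hy
  · rw [threeCycle_rotate hxy hxz hyz, threeCycle_rotate hyz hxy.symm hxz.symm]
    exact hcyc z (hz.resolve_left hyz.symm) x hx hxz.symm
  rcases hz with rfl | hz
  · exact hcyc x hx y hy hxy
  · exact h x hx y hy z hz hxy hxz hyz

lemma insert_insert (h : ThreeCyclesOn H S) (hS : ∀ s t, ∃ w ∈ S, w ≠ s ∧ w ≠ t)
    {v p q : α} (hv : v ∈ S) (hvp : v ≠ p) (hvq : v ≠ q) (hpq : p ≠ q)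
    (hvpq : threeCycle v p q ∈ H) : ThreeCyclesOn H (Insert.insert p (Insert.insert q S)) := by
  suffices ∃ w ∈ S, w ≠ v ∧ threeCycle w v q ∈ H by
    obtain ⟨w, hw, hwv, hwvq⟩ := this
    refine (h.insert hw hv hwv hwvq).insert (Set.mem_insert q S)
      (Set.mem_insert_of_mem q hv) hvq.symm ?_
    rwa [threeCycle_rotate hvq.symm hpq.symm hvp]
  by_cases hpS : p ∈ S
  · refine ⟨p, hpS, hvp.symm, ?_⟩
    rw [← threeCycle_inv hvp hvq hpq]
    exact H.inv_mem hvpq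
  by_cases hqS : q ∈ S
  · obtain ⟨w, hw, hwv, hwq⟩ := hS v q
    exact ⟨w, hw, hwv, h w hw v hv q hqS hwv hwq hvq⟩
  -- Both `p` and `q` are new: conjugate twice, first by a 3-cycle `(v w z)` on `S`.
  obtain ⟨w, hw, hwv, -⟩ := hS v v
  obtain ⟨z, hz, hzv, hzw⟩ := hS v w
  have hwp : w ≠ p := ne_of_mem_of_not_mem hw hpS
  have hwq : w ≠ q := ne_of_mem_of_not_mem hw hqS
  have hzp : z ≠ p := ne_of_mem_of_not_mem hz hpS
  have hzq : z ≠ q := ne_of_mem_of_not_mem hz hqS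
  have hρ := h v hv w hw z hz hwv.symm hzv.symm hzw.symm
  have hwpq : threeCycle w p q ∈ H := by
    have := H.mul_mem (H.mul_mem hρ hvpq) (H.inv_mem hρ)
    rwa [conj_threeCycle, threeCycle_apply_left hwv.symm hzv.symm,
      threeCycle_apply_of_ne hvp.symm hwp.symm hzp.symm,
      threeCycle_apply_of_ne hvq.symm hwq.symm hzq.symm] at this
  refine ⟨w, hw, hwv, ?_⟩
  have := H.mul_mem (H.mul_mem hwpq hvpq) (H.inv_mem hwpq)
  rwa [conj_threeCycle, threeCycle_apply_of_ne hwv.symm hvp hvq, threeCycle_apply_mid hwq hpq,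
    threeCycle_apply_right, ← threeCycle_rotate hwv hwq hvq] at this

lemma pair (H : Subgroup (Perm α)) (a b : α) : ThreeCyclesOn H {a, b} := by
  rintro x (rfl | rfl) y (rfl | rfl) z (rfl | rfl) <;> simp

lemma triple {H : Subgroup (Perm α)} {a b c : α} (hab : a ≠ b) (hac : a ≠ c)
    (hbc : b ≠ c) (h : threeCycle a b c ∈ H) : ThreeCyclesOn H {a, b, c} :=
  (pair H b c).insert (Set.mem_insert b {c}) (Set.mem_insert_of_mem b rfl) hbc
    (by rwa [← threeCycle_rotate hab hac hbc])

lemma mem_of_apply_eq_of_sign_eq_one [Fintype α] {x : α} (h : ThreeCyclesOn H {x}ᶜ)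
    {π : Perm α} (hπx : π x = x) (hπ : sign π = 1) : π ∈ H := by
  set τ : Perm {z // z ≠ x} := π.subtypePerm fun z => π.injective.ne_iff' hπx
  have hτ : ofSubtype τ = π := ofSubtype_subtypePerm _ fun z hz hzx => hz (hzx ▸ hπx)
  have hτA : τ ∈ Subgroup.closure {g : Perm {z // z ≠ x} | g.IsThreeCycle} := by
    rw [closure_three_cycles_eq_alternating, mem_alternatingGroup, ← sign_ofSubtype, hτ, hπ]
  rw [← hτ]
  refine (Subgroup.closure_le (H.comap ofSubtype)).mpr (fun g hg => ?_) hτA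
  obtain ⟨a, ha⟩ : g.support.Nonempty := Finset.card_pos.mp (by rw [hg.card_support]; norm_num)
  have hnd := hg.nodup_iff_mem_support.mpr ha
  simp only [List.nodup_cons, List.mem_cons, not_or, List.not_mem_nil,
    not_false_eq_true, List.nodup_nil, and_true] at hnd
  rw [SetLike.mem_coe, Subgroup.mem_comap, (hg.eq_swap_mul_swap_iff_mem_support).mpr ha, map_mul,
    ofSubtype_swap_eq, ofSubtype_swap_eq]
  exact h _ a.2 _ (g a).2 _ (g (g a)).2 (Subtype.coe_injective.ne hnd.1.1)
    (Subtype.coe_injective.ne hnd.1.2) (Subtype.coe_injective.ne hnd.2)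

end ThreeCyclesOn

end Equiv.Perm

namespace OneHole

open Equiv Perm

def IsFourLoop {V : Type*} (G : SimpleGraph V) (c : Fin 4 → V) : Prop :=
  Function.Injective c ∧ ∀ i, G.Adj (c i) (c (i + 1))

lemma IsFourLoop.rotate {V : Type*} {G : SimpleGraph V} {c : Fin 4 → V} (hc : IsFourLoop G c)
    (k : Fin 4) : IsFourLoop G (fun i => c (i + k)) :=
  ⟨hc.1.comp (add_left_injective k), fun i => by simpa [add_right_comm] using hc.2 (i + k)⟩

lemma IsFourLoop.induce_connected {V : Type*} {G : SimpleGraph V} {c : Fin 4 → V}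
    (hc : IsFourLoop G c) : (G.induce (Set.range c)).Connected := by
  let walk : G.Walk (c 0) (c 3) := .cons (hc.2 0) (.cons (hc.2 1) (.cons (hc.2 2) .nil))
  have hwalk := walk.connected_induce_support
  have hsupp : {v | v ∈ walk.support} = Set.range c := by
    ext v
    simp [walk, Fin.exists_fin_succ, eq_comm]
  rwa [hsupp] at hwalk

lemma exists_mem_range_of_mem_cycEdges {V : Type*} {c c' : Fin 4 → V} {e : Sym2 V}
    (he : e ∈ cycEdges c) (he' : e ∈ cycEdges c') :
    ∃ j, c j ∈ Set.range c' ∧ c (j + 1) ∈ Set.range c' := by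
  obtain ⟨j, rfl⟩ := he
  obtain ⟨i, hi⟩ := he'
  refine ⟨j, ?_⟩
  rcases Sym2.eq_iff.mp hi with ⟨h, h'⟩ | ⟨h, h'⟩
  · exact ⟨⟨i, h.symm⟩, ⟨i + 1, h'.symm⟩⟩
  · exact ⟨⟨i + 1, h.symm⟩, ⟨i, h'.symm⟩⟩

variable {V : Type*} [DecidableEq V] (G : SimpleGraph V) {κ : Type*}

/-- A hole move on total colorings `V → κ`: the dummy color at the hole travels with it. -/
def HoleMove (s t : V × (V → κ)) : Prop :=
  G.Adj s.1 t.1 ∧ t.2 = s.2 ∘ swap s.1 t.1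

abbrev HoleReach : V × (V → κ) → V × (V → κ) → Prop :=
  Relation.ReflTransGen (HoleMove G)

variable {G}

instance : Std.Symm (HoleMove G (κ := κ)) where
  symm := by
    rintro ⟨x, f⟩ ⟨y, g⟩ ⟨hxy, hg⟩
    refine ⟨hxy.symm, ?_⟩
    simp only at hg ⊢
    ext z
    simp [hg, swap_comm y x]

lemma HoleReach.symm {s t : V × (V → κ)} (h : HoleReach G s t) : HoleReach G t s :=
  Std.Symm.symm _ _ h

lemma holeReach_move {x y : V} (h : G.Adj x y) (f : V → κ) :
    HoleReach G (x, f) (y, f ∘ swap x y) :=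
  .single ⟨h, rfl⟩

lemma exists_holeReach_of_reachable {x y : V} (h : G.Reachable x y) (f : V → κ) :
    ∃ τ : Perm V, τ y = x ∧ HoleReach G (x, f) (y, f ∘ τ) := by
  rw [SimpleGraph.reachable_iff_reflTransGen] at h
  induction h with
  | refl => exact ⟨1, rfl, .refl⟩
  | @tail y z _ hyz ih =>
    obtain ⟨τ, hτ, hreach⟩ := ih
    refine ⟨τ * swap y z, by simp [hτ], hreach.trans ?_⟩
    exact holeReach_move hyz (f ∘ τ)

variable (G κ) in
def holeGroup (x : V) : Subgroup (Perm V) where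
  carrier := {π | ∀ f : V → κ, HoleReach G (x, f) (x, f ∘ π)}
  one_mem' _ := .refl
  mul_mem' hπ hρ f := (hπ f).trans (hρ (f ∘ _))
  inv_mem' {π} hπ f := by
    simpa [Function.comp_assoc] using (hπ (f ∘ ⇑π⁻¹)).symm

lemma conj_mem_holeGroup {x y : V} (h : G.Adj x y) {π : Perm V} (hπ : π ∈ holeGroup G κ x) :
    swap x y * π * (swap x y)⁻¹ ∈ holeGroup G κ y := by
  intro f
  have hreach := ((holeReach_move h.symm f).trans (hπ _)).trans (holeReach_move h _)
  simpa [swap_comm y x, Function.comp_assoc] using hreach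

lemma IsFourLoop.threeCycle_mem_holeGroup {c : Fin 4 → V} (hc : IsFourLoop G c) :
    threeCycle (c 1) (c 2) (c 3) ∈ holeGroup G κ (c 0) := by
  intro f
  have hreach := (((holeReach_move (hc.2 0) f).trans (holeReach_move (hc.2 1) _)).trans
    (holeReach_move (hc.2 2) _)).trans (holeReach_move (hc.2 3) _)
  have hne : ∀ i j : Fin 4, i ≠ j → c i ≠ c j := fun i j => hc.1.ne
  rwa [← swap_mul_swap_mul_swap_mul_swap (hne 0 1 (by decide)) (hne 0 2 (by decide))
    (hne 0 3 (by decide)) (hne 1 2 (by decide)) (hne 1 3 (by decide)) (hne 2 3 (by decide))]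

lemma threeCyclesOn_diff_of_adj {S : Set V} {x y : V} (hxy : G.Adj x y) (hy : y ∈ S)
    (h : ThreeCyclesOn (holeGroup G κ x) (S \ {x})) :
    ThreeCyclesOn (holeGroup G κ y) (S \ {y}) := by
  refine h.of_conj (swap x y) (fun _ => conj_mem_holeGroup hxy) ?_
  rintro z ⟨hzS, hzy⟩
  rw [swap_inv, swap_apply_def]
  split_ifs with hzx <;> simp_all [hxy.ne']

variable (G κ) in
def IsMixing (S : Set V) : Prop :=
  (G.induce S).Connected ∧ ∀ x ∈ S, ThreeCyclesOn (holeGroup G κ x) (S \ {x})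

lemma isMixing_of_threeCyclesOn {S : Set V} (hS : (G.induce S).Connected) {x : V} (hx : x ∈ S)
    (h : ThreeCyclesOn (holeGroup G κ x) (S \ {x})) : IsMixing G κ S := by
  suffices ∀ y : S, Relation.ReflTransGen (G.induce S).Adj ⟨x, hx⟩ y →
      ThreeCyclesOn (holeGroup G κ y) (S \ {(y : V)}) from
    ⟨hS, fun y hy =>
      this ⟨y, hy⟩ ((SimpleGraph.reachable_iff_reflTransGen _ _).mp (hS _ _))⟩
  intro y hy
  induction hy with
  | refl => exact h
  | @tail b c _ hbc ih => exact threeCyclesOn_diff_of_adj hbc c.2 ih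

lemma IsFourLoop.isMixing {c : Fin 4 → V} (hc : IsFourLoop G c) :
    IsMixing G κ (Set.range c) := by
  have hne : ∀ i j : Fin 4, i ≠ j → c i ≠ c j := fun i j => hc.1.ne
  refine isMixing_of_threeCyclesOn hc.induce_connected ⟨0, rfl⟩
    ((ThreeCyclesOn.triple (hne 1 2 (by decide)) (hne 1 3 (by decide)) (hne 2 3 (by decide))
      hc.threeCycle_mem_holeGroup).mono ?_)
  rintro z ⟨⟨i, rfl⟩, hi⟩
  fin_cases i <;> simp_all

lemma IsMixing.union_range {S : Set V} (hS : IsMixing G κ S) (hS3 : 3 < S.encard)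
    {c : Fin 4 → V} (hc : IsFourLoop G c) {j : Fin 4} (hj : c j ∈ S) (hj1 : c (j + 1) ∈ S) :
    IsMixing G κ (S ∪ Set.range c) := by
  suffices ∀ d, IsFourLoop G d → d 0 ∈ S → d 1 ∈ S →
      IsMixing G κ (S ∪ Set.range d) by
    have hrange : Set.range (fun i => c (i + j)) = Set.range c :=
      (Equiv.addRight j).surjective.range_comp c
    simpa [hrange] using this _ (hc.rotate j) (by simpa) (by simpa [add_comm])
  intro d hd hd0 hd1
  have hne : ∀ i j : Fin 4, i ≠ j → d i ≠ d j := fun i j => hd.1.ne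
  have hO : ∀ s t, ∃ w ∈ S \ {d 0}, w ≠ s ∧ w ≠ t := fun s t => by
    obtain ⟨w, hw, hw0, hws, hwt⟩ := Set.exists_mem_ne_of_three_lt_encard hS3 (d 0) s t
    exact ⟨w, ⟨hw, hw0⟩, hws, hwt⟩
  refine isMixing_of_threeCyclesOn (SimpleGraph.induce_union_connected hS.1.preconnected
    hd.induce_connected.preconnected ⟨d 0, hd0, 0, rfl⟩) (Or.inl hd0) ?_
  refine ((hS.2 _ hd0).insert_insert hO ⟨hd1, hne 1 0 (by decide)⟩ (hne 1 2 (by decide))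
    (hne 1 3 (by decide)) (hne 2 3 (by decide)) hd.threeCycle_mem_holeGroup).mono ?_
  rintro z ⟨hz | ⟨i, rfl⟩, hz0⟩
  · exact Or.inr (Or.inr ⟨hz, hz0⟩)
  · fin_cases i <;> simp_all

lemma isMixing_iUnion_range {L : ℕ} (hL : 0 < L) {C : Fin L → Fin 4 → V}
    (hC : ∀ l, IsFourLoop G (C l))
    (hglue : ∀ l : Fin L, 0 < (l : ℕ) → ∃ e, e ∈ cycEdges (C l) ∧
      ∃ l' : Fin L, (l' : ℕ) < (l : ℕ) ∧ e ∈ cycEdges (C l')) :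
    IsMixing G κ (⋃ l, Set.range (C l)) := by
  let W (m : ℕ) : Set V := ⋃ (l : Fin L) (_ : (l : ℕ) ≤ m), Set.range (C l)
  have hW : ∀ {l : Fin L} {m}, (l : ℕ) ≤ m → Set.range (C l) ⊆ W m := fun hl =>
    Set.subset_iUnion₂_of_subset _ hl subset_rfl
  have hW3 : ∀ m, 3 < (W m).encard := fun m =>
    calc (3 : ℕ∞) < ENat.card (Fin 4) := by simp; norm_num
      _ ≤ (Set.range (C ⟨0, hL⟩)).encard := (hC _).1.encard_range
      _ ≤ (W m).encard := Set.encard_le_encard (hW (Nat.zero_le m))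
  have hWL : W L = ⋃ l, Set.range (C l) := Set.iUnion_congr fun l => iSup_pos l.2.le
  rw [← hWL]
  suffices ∀ m, IsMixing G κ (W m) from this L
  intro m
  induction m with
  | zero =>
    rw [show W 0 = _ from Fin.iUnion_val_le_zero _ hL]
    exact (hC _).isMixing
  | succ m ih =>
    by_cases hm : m + 1 < L
    · obtain ⟨e, he, l', hl', he'⟩ := hglue ⟨m + 1, hm⟩ m.succ_pos
      obtain ⟨j, hj, hj1⟩ := exists_mem_range_of_mem_cycEdges he he'
      have hl'W := hW (m := m) (Nat.lt_succ_iff.mp hl')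
      rw [show W (m + 1) = _ from Fin.iUnion_val_le_succ _ hm]
      exact ih.union_range (hW3 m) (hC _) (hl'W hj) (hl'W hj1)
    · have hWm : W (m + 1) = W m :=
        Set.iUnion_congr fun l => iSup_congr_Prop (by omega) fun _ => rfl
      rwa [hWm]

variable [Fintype V]

/-- A repeated color off the hole absorbs the parity of `π`. -/
lemma holeReach_comp_of_fixed {x : V} (hx : ThreeCyclesOn (holeGroup G κ x) {x}ᶜ)
    {f : V → κ} {u u' : V} (hu : u ≠ x) (hu' : u' ≠ x) (huu' : u ≠ u') (hf : f u = f u')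
    {π : Perm V} (hπx : π x = x) : HoleReach G (x, f) (x, f ∘ π) := by
  by_cases hπ : sign π = 1
  · exact hx.mem_of_apply_eq_of_sign_eq_one hπx hπ f
  have hπ' : sign (swap u u' * π) = 1 := by
    rw [Perm.sign_mul, sign_swap huu', (Int.units_eq_one_or _).resolve_left hπ]
    rfl
  have hux := hx.mem_of_apply_eq_of_sign_eq_one (π := swap u u' * π)
    (by rw [mul_apply, hπx, swap_apply_of_ne_of_ne hu.symm hu'.symm]) hπ' f
  have hswap : f ∘ swap u u' = f := funext (apply_swap_eq_self hf)
  rwa [Perm.coe_mul, ← Function.comp_assoc, hswap] at hux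

lemma holeReach_of_connected (hG : G.Connected)
    (hfull : ∀ x, ThreeCyclesOn (holeGroup G κ x) {x}ᶜ) {x y : V} {f : V → κ} {u u' : V}
    (hu : u ≠ x) (hu' : u' ≠ x) (huu' : u ≠ u') (hf : f u = f u') {σ : Perm V}
    (hσ : σ y = x) :
    HoleReach G (x, f) (y, f ∘ σ) := by
  obtain ⟨τ, hτ, hreach⟩ := exists_holeReach_of_reachable (hG x y) f
  have hne : ∀ {w}, w ≠ x → τ⁻¹ w ≠ y := fun hw => by rwa [Ne, inv_eq_iff_eq, hτ]
  have hloop := holeReach_comp_of_fixed (hfull y) (f := f ∘ τ) (hne hu) (hne hu')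
    (τ⁻¹.injective.ne huu') (by simpa using hf) (π := τ⁻¹ * σ) (by simp [hσ, ← hτ])
  have hcomp : (f ∘ τ) ∘ ⇑(τ⁻¹ * σ) = f ∘ σ := by ext; simp
  exact hreach.trans (hcomp ▸ hloop)

end OneHole

namespace HoleIndex

open Equiv

variable {V : Type*} [DecidableEq V] {n : ℕ}

def coloring (a : HoleIndex V n) : V → Option (Fin n) :=
  fun z => if h : z = a.1 then none else some (a.2 ⟨z, h⟩)

lemma coloring_eq_none_iff (a : HoleIndex V n) {z : V} : a.coloring z = none ↔ z = a.1 := by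
  simp [coloring]

lemma coloring_of_ne (a : HoleIndex V n) {z : V} (hz : z ≠ a.1) :
    a.coloring z = some (a.2 ⟨z, hz⟩) :=
  dif_neg hz

lemma coloring_injective : Function.Injective (coloring (V := V) (n := n)) := by
  rintro ⟨x, α⟩ ⟨y, β⟩ h
  obtain rfl : x = y :=
    (coloring_eq_none_iff ⟨y, β⟩).mp (h ▸ (coloring_eq_none_iff ⟨x, α⟩).mpr rfl)
  congr
  funext z
  have hz := congrFun h z
  rwa [coloring_of_ne ⟨x, α⟩ z.2, coloring_of_ne ⟨x, β⟩ z.2, Option.some_inj] at hz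

lemma coloring_moveConf {x y : V} (hxy : x ≠ y) (α : HoleConf V n x) :
    coloring (⟨y, moveConf x y hxy α⟩ : HoleIndex V n)
      = coloring (⟨x, α⟩ : HoleIndex V n) ∘ swap x y := by
  ext z : 1
  simp only [coloring, moveConf, Function.comp_apply, swap_apply_def]
  split_ifs <;> simp_all

lemma card_coloring_eq_some [Fintype V] (a : HoleIndex V n) (β : Fin n) :
    Fintype.card {z // a.coloring z = some β} = flavorCount a β := by
  rw [flavorCount, ← Fintype.card_subtype]
  refine Fintype.card_congr ((subtypeSubtypeEquivSubtype fun {z} hz => ?_).symm.trans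
    (subtypeEquivRight fun z => by rw [coloring_of_ne a z.2, Option.some_inj]))
  rintro rfl
  simp [coloring] at hz

lemma exists_perm_of_flavorCount_eq [Fintype V] {a b : HoleIndex V n}
    (h : flavorCount a = flavorCount b) : ∃ σ : Perm V, b.coloring = a.coloring ∘ σ := by
  refine exists_perm_comp_eq_of_card_fiber_eq fun c => ?_
  cases c with
  | none =>
    rw [Fintype.card_congr (subtypeEquivRight fun z => a.coloring_eq_none_iff),
      Fintype.card_congr (subtypeEquivRight fun z => b.coloring_eq_none_iff)]
    simp
  | some β => rw [card_coloring_eq_some, card_coloring_eq_some, h]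

variable (G : SimpleGraph V) in
def Step (p q : HoleIndex V n) : Prop :=
  ∃ h : G.Adj p.1 q.1, q.2 = moveConf p.1 q.1 h.ne p.2

lemma reflTransGen_step_of_holeReach {G : SimpleGraph V} {a b : HoleIndex V n}
    (h : OneHole.HoleReach G (a.1, a.coloring) (b.1, b.coloring)) :
    Relation.ReflTransGen (Step G) a b := by
  suffices ∀ s, OneHole.HoleReach G (a.1, a.coloring) s →
      ∃ c : HoleIndex V n, s = (c.1, c.coloring) ∧ Relation.ReflTransGen (Step G) a c by
    obtain ⟨c, hc, hac⟩ := this _ h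
    rwa [coloring_injective (Prod.ext_iff.mp hc).2]
  intro s hs
  induction hs with
  | refl => exact ⟨a, rfl, .refl⟩
  | tail _ hmove ih =>
    obtain ⟨c, rfl, hac⟩ := ih
    obtain ⟨hadj, hcol⟩ := hmove
    refine ⟨⟨_, moveConf c.1 _ hadj.ne c.2⟩, ?_, hac.tail ⟨hadj, rfl⟩⟩
    rw [Prod.ext_iff, hcol, coloring_moveConf]
    exact ⟨rfl, rfl⟩

end HoleIndex

open OneHole Equiv.Perm in
theorem four_loop_lattice_connectivity_general
    {V : Type*} [Fintype V] [DecidableEq V] (G : SimpleGraph V)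
    (n : ℕ)
    (L : ℕ) (hL : 0 < L) (C : Fin L → (Fin 4 → V))
    (hinj : ∀ l, Function.Injective (C l))
    (hadj : ∀ l (i : Fin 4), G.Adj (C l i) (C l (i + 1)))
    (hcover : (Set.univ : Set V) = ⋃ l, Set.range (C l))
    (hglue : ∀ l : Fin L, 0 < (l : ℕ) →
      ∃ e, e ∈ cycEdges (C l) ∧ ∃ l' : Fin L, (l' : ℕ) < (l : ℕ) ∧ e ∈ cycEdges (C l'))
    (hcard : n + 2 ≤ Fintype.card V) :
    ∀ a b : HoleIndex V n, flavorCount a = flavorCount b →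
      Relation.ReflTransGen
        (fun p q : HoleIndex V n =>
          ∃ h : G.Adj p.1 q.1, q.2 = moveConf p.1 q.1 h.ne p.2) a b := by
  intro a b hab
  have hmix : IsMixing G (Option (Fin n)) Set.univ := by
    rw [hcover]
    exact isMixing_iUnion_range hL (fun l => ⟨hinj l, hadj l⟩) hglue
  have hG : G.Connected := G.induceUnivIso.connected_iff.mp hmix.1
  have hfull (x : V) : ThreeCyclesOn (holeGroup G (Option (Fin n)) x) {x}ᶜ := by
    simpa [Set.compl_eq_univ_sdiff] using hmix.2 x trivial
  obtain ⟨σ, hσ⟩ := HoleIndex.exists_perm_of_flavorCount_eq hab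
  have hσb : σ b.1 = a.1 := by
    rw [← HoleIndex.coloring_eq_none_iff, ← Function.comp_apply (f := a.coloring), ← hσ,
      HoleIndex.coloring_eq_none_iff]
  obtain ⟨u, u', huu', hu⟩ : ∃ u u' : {z // z ≠ a.1}, u ≠ u' ∧ a.2 u = a.2 u' :=
    Fintype.exists_ne_map_eq_of_card_lt a.2 (by
      rw [Fintype.card_fin, Fintype.card_subtype_compl, Fintype.card_subtype_eq]
      omega)
  apply HoleIndex.reflTransGen_step_of_holeReach
  rw [hσ]
  exact holeReach_of_connected hG hfull u.2 u'.2 (Subtype.coe_injective.ne huu')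
    (by rw [a.coloring_of_ne u.2, a.coloring_of_ne u'.2, hu]) hσb

/-- Connectivity condition for lattices built from 4-loops: if the lattice `G`
is obtained by successively gluing 4-cycles `C 0, C 1, …`, each new 4-cycle
sharing at least one edge with the union of the previous ones and at most one
edge with each individual previous one, and if there are at least `n + 2`
sites, then the SU(n) one-hole model satisfies the connectivity condition:
any two basis indices `(x, α)` and `(x', α')` with the same flavor
multiplicities are connected by a sequence of elementary hole moves. -/
theorem four_loop_lattice_connectivity
    {V : Type*} [Fintype V] [DecidableEq V] (G : SimpleGraph V)
    (n : ℕ) [NeZero n]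
    (L : ℕ) (hL : 0 < L) (C : Fin L → (Fin 4 → V))
    (hinj : ∀ l, Function.Injective (C l))
    (hadj : ∀ l (i : Fin 4), G.Adj (C l i) (C l (i + 1)))
    (hedges : G.edgeSet = ⋃ l, cycEdges (C l))
    (hcover : (Set.univ : Set V) = ⋃ l, Set.range (C l))
    (hglue : ∀ l : Fin L, 0 < (l : ℕ) →
      ∃ e, e ∈ cycEdges (C l) ∧ ∃ l' : Fin L, (l' : ℕ) < (l : ℕ) ∧ e ∈ cycEdges (C l'))
    (hshare : ∀ l l' : Fin L, (l' : ℕ) < (l : ℕ) →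
      Set.Subsingleton (cycEdges (C l) ∩ cycEdges (C l')))
    (hcard : n + 2 ≤ Fintype.card V) :
    ∀ a b : HoleIndex V n, flavorCount a = flavorCount b →
      Relation.ReflTransGen
        (fun p q : HoleIndex V n =>
          ∃ h : G.Adj p.1 q.1, q.2 = moveConf p.1 q.1 h.ne p.2) a b :=
  four_loop_lattice_connectivity_general G n L hL C hinj hadj hcover hglue hcard
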